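/- Let d, f, g be real numbers with d > 1, f > 0, g > 0, define σ*(h) = (√(h²(h²(d²−1)² + 2f²g²(d²+1)) + f⁴g⁴) + h²(d²−1) + f²g²)/(2g²), K(h) = d g σ*(h)/(g²σ*(h) + h²), and VoI(h) = K(h)²·σ*(h). Then the Value of Information diverges as the signal noise grows: VoI(h) → ∞ as h → ∞. -/

import Mathlib

open Filter

/-! The steady-state variance grows like `(d² - 1) h² / g²`: the square root alone dominates
`(d² - 1) h²`. Feeding `g² σ* ≥ (d² - 1) h²` into the Kalman gain bounds it below by the constant
`(d² - 1) / (d g)`, so the Value of Information grows at least like `σ*`, hence quadratically. -/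

noncomputable def steadyStateVariance (d f g h : ℝ) : ℝ :=
  (Real.sqrt (h ^ 2 * (h ^ 2 * (d ^ 2 - 1) ^ 2 + 2 * f ^ 2 * g ^ 2 * (d ^ 2 + 1))
    + f ^ 4 * g ^ 4) + h ^ 2 * (d ^ 2 - 1) + f ^ 2 * g ^ 2) / (2 * g ^ 2)

lemma mul_sq_le_sq_mul_steadyStateVariance (d f h : ℝ) {g : ℝ} (hg : g ≠ 0) :
    (d ^ 2 - 1) * h ^ 2 ≤ g ^ 2 * steadyStateVariance d f g h := by
  have hsqrt : (d ^ 2 - 1) * h ^ 2 ≤ Real.sqrt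
      (h ^ 2 * (h ^ 2 * (d ^ 2 - 1) ^ 2 + 2 * f ^ 2 * g ^ 2 * (d ^ 2 + 1)) + f ^ 4 * g ^ 4) := by
    refine (le_abs_self _).trans (Real.abs_le_sqrt ?_)
    nlinarith [mul_nonneg (sq_nonneg (h * f * g)) (by positivity : (0 : ℝ) ≤ d ^ 2 + 1),
      sq_nonneg (f ^ 2 * g ^ 2)]
  have hg2 : (0 : ℝ) < 2 * g ^ 2 := by positivity
  rw [steadyStateVariance, mul_div_assoc', le_div_iff₀ hg2]
  nlinarith [sq_nonneg g, sq_nonneg (f * g * g), mul_le_mul_of_nonneg_left hsqrt (sq_nonneg g)]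

lemma tendsto_steadyStateVariance_atTop {d : ℝ} (f : ℝ) {g : ℝ} (hd : 1 < d) (hg : g ≠ 0) :
    Tendsto (steadyStateVariance d f g) atTop atTop := by
  have hc : 0 < (d ^ 2 - 1) / g ^ 2 := div_pos (by nlinarith) (by positivity)
  refine tendsto_atTop_mono (fun h => ?_)
    ((tendsto_pow_atTop (n := 2) two_ne_zero).const_mul_atTop hc)
  rw [div_mul_eq_mul_div, div_le_iff₀' (by positivity)]
  exact mul_sq_le_sq_mul_steadyStateVariance d f h hg

lemma div_le_kalmanGain {d g s h : ℝ} (hd : 0 < d) (hg : 0 < g) (hs : 0 < s)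
    (hsh : (d ^ 2 - 1) * h ^ 2 ≤ g ^ 2 * s) :
    (d ^ 2 - 1) / (d * g) ≤ d * g * s / (g ^ 2 * s + h ^ 2) := by
  rw [div_le_div_iff₀ (by positivity) (by positivity)]
  nlinarith

theorem voi_diverges_large_noise_general (d f g : ℝ)
    (hd : 1 < d) (hg : 0 < g)
    (σstar K VoI : ℝ → ℝ)
    (hσ : ∀ h : ℝ, σstar h =
      (Real.sqrt (h ^ 2 * (h ^ 2 * (d ^ 2 - 1) ^ 2 + 2 * f ^ 2 * g ^ 2 * (d ^ 2 + 1))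
        + f ^ 4 * g ^ 4) + h ^ 2 * (d ^ 2 - 1) + f ^ 2 * g ^ 2) / (2 * g ^ 2))
    (hK : ∀ h : ℝ, K h = d * g * σstar h / (g ^ 2 * σstar h + h ^ 2))
    (hV : ∀ h : ℝ, VoI h = (K h) ^ 2 * σstar h) :
    Tendsto VoI atTop atTop := by
  obtain rfl : σstar = steadyStateVariance d f g := funext hσ
  have hd0 : 0 < d := zero_lt_one.trans hd
  have hc : 0 < (d ^ 2 - 1) / (d * g) := div_pos (by nlinarith) (by positivity)
  have hσlim := tendsto_steadyStateVariance_atTop f hd hg.ne'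
  refine tendsto_atTop_mono' _ ?_ (hσlim.const_mul_atTop (pow_pos hc 2))
  filter_upwards [hσlim.eventually_gt_atTop 0] with h hpos
  have hgain := div_le_kalmanGain hd0 hg hpos
    (mul_sq_le_sq_mul_steadyStateVariance d f h hg.ne')
  rw [hV, hK]
  exact mul_le_mul_of_nonneg_right (pow_le_pow_left₀ hc.le hgain 2) hpos.le

/-- With market growth `d > 1`, the Value of Information `VoI(h) = K(h)²σ*(h)` diverges
to infinity as the signal noise `h` grows. -/
theorem voi_diverges_large_noise (d f g : ℝ)
    (hd : 1 < d) (hf : 0 < f) (hg : 0 < g)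
    (σstar K VoI : ℝ → ℝ)
    (hσ : ∀ h : ℝ, σstar h =
      (Real.sqrt (h ^ 2 * (h ^ 2 * (d ^ 2 - 1) ^ 2 + 2 * f ^ 2 * g ^ 2 * (d ^ 2 + 1))
        + f ^ 4 * g ^ 4) + h ^ 2 * (d ^ 2 - 1) + f ^ 2 * g ^ 2) / (2 * g ^ 2))
    (hK : ∀ h : ℝ, K h = d * g * σstar h / (g ^ 2 * σstar h + h ^ 2))
    (hV : ∀ h : ℝ, VoI h = (K h) ^ 2 * σstar h) :
    Tendsto VoI atTop atTop :=
  voi_diverges_large_noise_general d f g hd hg σstar K VoI hσ hK hV
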